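/- arXiv:1809.02699 — 4 statements merged into one kernel-verified Lean document; each statement's English description precedes it below -/
import Mathlib

section
/- Let f : ℝ → ℝ satisfy the seven conditions: (1) f(x) ≥ 0 for all x and f(0) = 0; (2) f is even; (3) f is continuously differentiable; (4) f′(x) ≥ 0 for all x ≥ 0; (5) the function x ↦ f′(x)/(2x) (extended by its limit at 0) is continuous and strictly decreasing on [0, ∞); (6) lim_{x→∞} f′(x)/(2x) = 0; (7) lim_{x→0⁺} f′(x)/(2x) = M with 0 < M < ∞. Let g : (0, M] → [0, β) be a strictly convex strictly decreasing function with f(x) = inf_{0 < w ≤ M} ( w·x² + g(w) ) for all x. Then for every fixed x̃ > 0, the value w = f′(x̃)/(2x̃) lies in (0, M], attains this infimum, i.e. w·x̃² + g(w) = f(x̃), and it is the unique point in (0, M] attaining it. -/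
open Real Filter Set

set_option maxHeartbeats 1000000 in
/-- Minimizer/uniqueness part of the half-quadratic representation theorem
(Theorem 1, Charbonnier et al. 1997): for each fixed xt > 0 the infimum in
f(xt) = inf_{0 < w ≤ M} (w xt² + g w) is attained uniquely at w = f′(xt)/(2 xt). -/
theorem half_quadratic_minimizer_unique
    (f : ℝ → ℝ) (M β : ℝ) (g : ℝ → ℝ)
    (h1 : ∀ x, 0 ≤ f x) (h1' : f 0 = 0)
    (h2 : ∀ x, f x = f (-x))
    (h3 : ContDiff ℝ 1 f)
    (h4 : ∀ x ≥ 0, 0 ≤ deriv f x)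
    (h5 : ∃ wf : ℝ → ℝ, (∀ x > 0, wf x = deriv f x / (2 * x)) ∧
          ContinuousOn wf (Set.Ici 0) ∧ StrictAntiOn wf (Set.Ici 0))
    (h6 : Tendsto (fun x => deriv f x / (2 * x)) atTop (nhds 0))
    (h7 : Tendsto (fun x => deriv f x / (2 * x)) (nhdsWithin 0 (Set.Ioi 0)) (nhds M))
    (hM : 0 < M)
    (hg1 : StrictConvexOn ℝ (Set.Ioc 0 M) g)
    (hg2 : StrictAntiOn g (Set.Ioc 0 M))
    (hg3 : Set.MapsTo g (Set.Ioc 0 M) (Set.Ico 0 β))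
    (hg4 : ∀ x : ℝ, IsGLB ((fun w => w * x ^ 2 + g w) '' Set.Ioc 0 M) (f x))
    (xt : ℝ) (hxt : 0 < xt) :
    deriv f xt / (2 * xt) ∈ Set.Ioc 0 M ∧
    (deriv f xt / (2 * xt)) * xt ^ 2 + g (deriv f xt / (2 * xt)) = f xt ∧
    ∀ w ∈ Set.Ioc 0 M, w * xt ^ 2 + g w = f xt → w = deriv f xt / (2 * xt) := by
  obtain ⟨wf, hwf_eq, hwf_cont, hwf_anti⟩ := h5
  have hfd : Differentiable ℝ f := h3.differentiable one_ne_zero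
  -- derivative of F(u) = f (√u)
  have hF : ∀ u : ℝ, 0 < u →
      HasDerivAt (fun u => f (Real.sqrt u)) (wf (Real.sqrt u)) u := by
    intro u hu
    have hs : HasDerivAt Real.sqrt (1 / (2 * Real.sqrt u)) u :=
      Real.hasDerivAt_sqrt (ne_of_gt hu)
    have hd : HasDerivAt f (deriv f (Real.sqrt u)) (Real.sqrt u) :=
      (hfd (Real.sqrt u)).hasDerivAt
    have := hd.comp u hs
    refine this.congr_deriv ?_
    rw [hwf_eq _ (Real.sqrt_pos.mpr hu)]
    ring
  -- strict concavity inequality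
  have key : ∀ p q : ℝ, 0 ≤ p → 0 ≤ q → p ≠ q →
      f p < f q + wf q * (p ^ 2 - q ^ 2) := by
    intro p q hp hq hpq
    have hcont : ∀ a b : ℝ, ContinuousOn (fun u => f (Real.sqrt u)) (Icc a b) :=
      fun a b => (hfd.continuous.comp Real.continuous_sqrt).continuousOn
    rcases lt_or_gt_of_ne hpq with h | h
    · have hsq : p ^ 2 < q ^ 2 := by nlinarith
      obtain ⟨ξ, hξ, hslope⟩ := exists_hasDerivAt_eq_slope (fun u => f (Real.sqrt u))
        (fun u => wf (Real.sqrt u)) hsq (hcont _ _)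
        (fun x hx => hF x (lt_of_le_of_lt (by positivity) hx.1))
      have hξ0 : 0 < ξ := lt_of_le_of_lt (by positivity) hξ.1
      have hsl : Real.sqrt ξ < q := by
        have := Real.sqrt_lt_sqrt (le_of_lt hξ0) hξ.2
        rwa [Real.sqrt_sq hq] at this
      have hmono : wf q < wf (Real.sqrt ξ) :=
        hwf_anti (Real.sqrt_nonneg ξ) hq hsl
      rw [Real.sqrt_sq hp, Real.sqrt_sq hq] at hslope
      rw [hslope] at hmono
      have hd : 0 < q ^ 2 - p ^ 2 := by linarith
      have := (lt_div_iff₀ hd).mp hmono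
      nlinarith
    · have hsq : q ^ 2 < p ^ 2 := by nlinarith
      obtain ⟨ξ, hξ, hslope⟩ := exists_hasDerivAt_eq_slope (fun u => f (Real.sqrt u))
        (fun u => wf (Real.sqrt u)) hsq (hcont _ _)
        (fun x hx => hF x (lt_of_le_of_lt (by positivity) hx.1))
      have hξ0 : 0 < ξ := lt_of_le_of_lt (by positivity) hξ.1
      have hsl : q < Real.sqrt ξ := by
        have := Real.sqrt_lt_sqrt (by positivity) hξ.1
        rwa [Real.sqrt_sq hq] at this
      have hmono : wf (Real.sqrt ξ) < wf q :=
        hwf_anti hq (Real.sqrt_nonneg ξ) hsl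
      rw [Real.sqrt_sq hp, Real.sqrt_sq hq] at hslope
      rw [hslope] at hmono
      have hd : 0 < p ^ 2 - q ^ 2 := by linarith
      have := (div_lt_iff₀ hd).mp hmono
      nlinarith
  -- wf 0 = M
  have hwf0 : wf 0 = M := by
    have h7' : Tendsto wf (nhdsWithin 0 (Set.Ioi 0)) (nhds M) := by
      refine h7.congr' ?_
      filter_upwards [self_mem_nhdsWithin] with x hx
      exact (hwf_eq x hx).symm
    have hcw : Tendsto wf (nhdsWithin 0 (Set.Ioi 0)) (nhds (wf 0)) :=
      ((hwf_cont 0 Set.self_mem_Ici).mono_left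
        (nhdsWithin_mono 0 (Set.Ioi_subset_Ici le_rfl)))
    exact tendsto_nhds_unique hcw h7'
  -- positivity of wf on [0,∞)
  have hwfnn : ∀ x : ℝ, 0 < x → 0 ≤ wf x := by
    intro x hx
    rw [hwf_eq x hx]
    exact div_nonneg (h4 x (le_of_lt hx)) (by linarith)
  have hwfpos : ∀ x : ℝ, 0 ≤ x → 0 < wf x := by
    intro x hx
    have h1 : wf (x + 1) < wf x := hwf_anti hx (by simp; linarith) (by linarith)
    have := hwfnn (x + 1) (by linarith)
    linarith
  have hwtlt : wf xt < M := by
    rw [← hwf0]; exact hwf_anti Set.self_mem_Ici (le_of_lt hxt) hxt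
  have hwt_mem : wf xt ∈ Set.Ioc 0 M :=
    ⟨hwfpos xt (le_of_lt hxt), le_of_lt hwtlt⟩
  have hrw : deriv f xt / (2 * xt) = wf xt := (hwf_eq xt hxt).symm
  rw [hrw]
  -- lower bound from the GLB
  have hlb : ∀ x : ℝ, ∀ w ∈ Set.Ioc 0 M, f x ≤ w * x ^ 2 + g w :=
    fun x w hw => (hg4 x).1 ⟨w, hw, rfl⟩
  -- attainment
  have hmain : wf xt * xt ^ 2 + g (wf xt) = f xt := by
    have hle : f xt ≤ wf xt * xt ^ 2 + g (wf xt) := hlb xt (wf xt) hwt_mem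
    by_contra hne
    set δ := wf xt * xt ^ 2 + g (wf xt) - f xt with hδdef
    have hδ : 0 < δ := by
      rcases lt_or_eq_of_le hle with h | h
      · simpa [hδdef] using sub_pos.mpr h
      · exact absurd h.symm hne
    -- continuity of g at wf xt
    have hgc : ContinuousAt g (wf xt) := by
      have hconv : ConvexOn ℝ (Set.Ioo 0 M) g :=
        hg1.convexOn.subset Set.Ioo_subset_Ioc_self (convex_Ioo 0 M)
      have := hconv.continuousOn isOpen_Ioo
      exact this.continuousAt (isOpen_Ioo.mem_nhds ⟨hwt_mem.1, hwtlt⟩)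
    obtain ⟨ε, hε, hεg⟩ := Metric.continuousAt_iff.mp hgc (δ / 4) (by linarith)
    set η := min ε (δ / (4 * (xt ^ 2 + 1))) with hηdef
    have hη : 0 < η := lt_min hε (by positivity)
    have hηε : η ≤ ε := by rw [hηdef]; exact min_le_left _ _
    have hηg : ∀ y : ℝ, |y - wf xt| < η → |g y - g (wf xt)| < δ / 4 := by
      intro y hy
      have hd : dist y (wf xt) < ε := by rw [Real.dist_eq]; linarith
      simpa [Real.dist_eq] using hεg hd
    have hηx : η * xt ^ 2 < δ / 4 := by
      have h1 : η ≤ δ / (4 * (xt ^ 2 + 1)) := by rw [hηdef]; exact min_le_right _ _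
      have h2 : δ / (4 * (xt ^ 2 + 1)) * xt ^ 2 < δ / 4 := by
        rw [div_mul_eq_mul_div, div_lt_div_iff₀ (by positivity) (by norm_num)]
        nlinarith
      calc η * xt ^ 2 ≤ δ / (4 * (xt ^ 2 + 1)) * xt ^ 2 :=
            mul_le_mul_of_nonneg_right h1 (sq_nonneg xt)
        _ < δ / 4 := h2
    -- points x₁ > xt and x₂ ∈ (0, xt) with wf close to wf xt
    have hwfc : ContinuousAt wf xt := by
      refine hwf_cont.continuousAt ?_
      exact mem_nhds_iff.mpr ⟨Set.Ioi 0, Set.Ioi_subset_Ici le_rfl, isOpen_Ioi, hxt⟩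
    obtain ⟨ρ, hρ, hρw⟩ := Metric.continuousAt_iff.mp hwfc η hη
    set x₁ := xt + ρ / 2 with hx₁def
    set x₂ := max (xt / 2) (xt - ρ / 2) with hx₂def
    have hx₁gt : xt < x₁ := by simp [hx₁def]; linarith
    have hx₂lt : x₂ < xt := by
      apply max_lt <;> linarith
    have hx₂pos : 0 < x₂ := lt_of_lt_of_le (by linarith) (le_max_left _ _)
    have hw₁ : |wf x₁ - wf xt| < η := by
      have : dist x₁ xt < ρ := by
        simp [Real.dist_eq, hx₁def]; rw [abs_of_pos (by linarith)]; linarith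
      simpa [Real.dist_eq] using hρw this
    have hw₂ : |wf x₂ - wf xt| < η := by
      have : dist x₂ xt < ρ := by
        rw [Real.dist_eq, abs_of_neg (by linarith)]
        have : xt - ρ / 2 ≤ x₂ := le_max_right _ _
        linarith
      simpa [Real.dist_eq] using hρw this
    have hw₁lt : wf x₁ < wf xt := hwf_anti (le_of_lt hxt) (by simp; linarith) hx₁gt
    have hw₂gt : wf xt < wf x₂ := hwf_anti (le_of_lt hx₂pos) (le_of_lt hxt) hx₂lt
    -- the three lower bounds
    have hb₁ : f xt < f x₁ + wf x₁ * (xt ^ 2 - x₁ ^ 2) :=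
      key xt x₁ (le_of_lt hxt) (by linarith) (ne_of_lt hx₁gt)
    have hb₂ : f xt < f x₂ + wf x₂ * (xt ^ 2 - x₂ ^ 2) :=
      key xt x₂ (le_of_lt hxt) (le_of_lt hx₂pos) (ne_of_gt hx₂lt)
    set b := min (f xt + δ / 2)
      (min (f x₁ + wf x₁ * (xt ^ 2 - x₁ ^ 2)) (f x₂ + wf x₂ * (xt ^ 2 - x₂ ^ 2))) with hbdef
    have hbgt : f xt < b := by
      apply lt_min (by linarith)
      exact lt_min hb₁ hb₂
    have hblb : b ∈ lowerBounds ((fun w => w * xt ^ 2 + g w) '' Set.Ioc 0 M) := by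
      rintro y ⟨w, hw, rfl⟩
      simp only
      rcases lt_or_ge (|w - wf xt|) η with hmid | hfar
      · -- middle region
        have hg' : g (wf xt) - δ / 4 < g w := by
          have := hηg w hmid
          have := abs_lt.mp this
          linarith [this.1]
        have hwlow : wf xt - η < w := by
          have := abs_lt.mp hmid
          linarith [this.1]
        have hmm : (wf xt - η) * xt ^ 2 ≤ w * xt ^ 2 :=
          mul_le_mul_of_nonneg_right (le_of_lt hwlow) (sq_nonneg xt)
        have : wf xt * xt ^ 2 - η * xt ^ 2 ≤ w * xt ^ 2 := by nlinarith [hmm]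
        have hfin : f xt + δ / 2 ≤ w * xt ^ 2 + g w := by linarith [hδdef]
        have hb1 : b ≤ f xt + δ / 2 := by rw [hbdef]; exact min_le_left _ _
        linarith
      · rcases le_abs.mp hfar with hhi | hlo
        · -- high region : wf xt + η ≤ w
          have hwge : wf x₂ ≤ w := by
            have := abs_lt.mp hw₂
            linarith [this.2]
          have hgw : f x₂ - w * x₂ ^ 2 ≤ g w := by linarith [hlb x₂ w hw]
          have hpos : 0 ≤ xt ^ 2 - x₂ ^ 2 := by
            have := pow_lt_pow_left₀ hx₂lt (le_of_lt hx₂pos) (two_ne_zero)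
            linarith
          have hmul : wf x₂ * (xt ^ 2 - x₂ ^ 2) ≤ w * (xt ^ 2 - x₂ ^ 2) :=
            mul_le_mul_of_nonneg_right hwge hpos
          have hb1 : b ≤ f x₂ + wf x₂ * (xt ^ 2 - x₂ ^ 2) := by
            rw [hbdef]; exact le_trans (min_le_right _ _) (min_le_right _ _)
          linarith
        · -- low region : w ≤ wf xt - η
          have hwle : w ≤ wf x₁ := by
            have := abs_lt.mp hw₁
            linarith [this.1]
          have hgw : f x₁ - w * x₁ ^ 2 ≤ g w := by linarith [hlb x₁ w hw]
          have hneg : xt ^ 2 - x₁ ^ 2 ≤ 0 := by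
            have := pow_lt_pow_left₀ hx₁gt (le_of_lt hxt) (two_ne_zero)
            linarith
          have hmul : wf x₁ * (xt ^ 2 - x₁ ^ 2) ≤ w * (xt ^ 2 - x₁ ^ 2) := by
            have := mul_le_mul_of_nonneg_right hwle (neg_nonneg.mpr hneg)
            nlinarith [this]
          have hb1 : b ≤ f x₁ + wf x₁ * (xt ^ 2 - x₁ ^ 2) := by
            rw [hbdef]; exact le_trans (min_le_right _ _) (min_le_left _ _)
          linarith
    have := (hg4 xt).2 hblb
    linarith
  refine ⟨hwt_mem, hmain, ?_⟩
  -- uniqueness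
  intro w hw heq
  by_contra hne
  -- find x ≥ 0, x ≠ xt, wf x = w
  have hx : ∃ x : ℝ, 0 ≤ x ∧ x ≠ xt ∧ wf x = w := by
    rcases lt_or_gt_of_ne hne with hlt | hgt
    · -- w < wf xt : find X with wf X < w, IVT on [xt, X]
      have hev : ∀ᶠ x in atTop, deriv f x / (2 * x) < w :=
        h6.eventually_lt_const hw.1
      obtain ⟨X, hX⟩ := (hev.and (eventually_gt_atTop xt)).exists
      have hXgt : xt < X := hX.2
      have hwX : wf X < w := by rw [hwf_eq X (lt_trans hxt hXgt)]; exact hX.1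
      have := intermediate_value_Icc' (le_of_lt hXgt)
        (hwf_cont.mono (fun y hy => le_trans (le_of_lt hxt) hy.1))
      have hmem : w ∈ Set.Icc (wf X) (wf xt) := ⟨le_of_lt hwX, le_of_lt hlt⟩
      obtain ⟨x, hxm, hxw⟩ := this hmem
      exact ⟨x, le_trans (le_of_lt hxt) hxm.1, fun h => hne (by rw [← hxw, h]), hxw⟩
    · -- w > wf xt : IVT on [0, xt]
      have := intermediate_value_Icc' (le_of_lt hxt)
        (hwf_cont.mono (fun y hy => hy.1))
      have hmem : w ∈ Set.Icc (wf xt) (wf 0) := ⟨le_of_lt hgt, by rw [hwf0]; exact hw.2⟩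
      obtain ⟨x, hxm, hxw⟩ := this hmem
      exact ⟨x, hxm.1, fun h => hne (by rw [← hxw, h]), hxw⟩
  obtain ⟨x, hx0, hxne, hxw⟩ := hx
  have hk := key xt x (le_of_lt hxt) hx0 (fun h => hxne h.symm)
  rw [hxw] at hk
  have hfx := hlb x w hw
  linarith [hk, hfx, heq]
end

section
/- Let σ > 0 and let κ_σ : ℝ → ℝ be the Gaussian kernel κ_σ(x) = exp(−x²/(2σ²)). Then there exists a convex function ψ : [−1, 0) → [−1, 0) such that for every x ∈ ℝ, κ_σ(x) = sup_{−1 ≤ p < 0} ( (p/(2σ²))·x² − ψ(p) ), and for each fixed x the supremum is attained at p = −κ_σ(x). -/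
open Real Filter Set

lemma psi_convex_aux : ConvexOn ℝ (Set.Iic (0:ℝ)) (fun p => (-p) * Real.log (-p)) := by
  have h := Real.convexOn_mul_log
  have := h.comp_affineMap (-(AffineMap.id ℝ ℝ))
  have hs : Set.Iic (0:ℝ) = ⇑(-AffineMap.id ℝ ℝ) ⁻¹' Ici 0 := by ext p; simp
  have hf : (fun p : ℝ => (-p) * Real.log (-p)) = (fun x => x * log x) ∘ ⇑(-AffineMap.id ℝ ℝ) := by
    ext p; simp
  rw [hs, hf]; exact this

lemma key_ineq (t : ℝ) {q : ℝ} (hq : 0 < q) :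
    q * (-t - Real.log q) + q ≤ Real.exp (-t) := by
  have hE : 0 < Real.exp (-t) := Real.exp_pos _
  have h := Real.log_le_sub_one_of_pos (div_pos hE hq)
  rw [Real.log_div (ne_of_gt hE) (ne_of_gt hq), Real.log_exp] at h
  have := mul_le_mul_of_nonneg_left h hq.le
  have hd : q * (Real.exp (-t) / q) = Real.exp (-t) := by field_simp
  nlinarith [this, hd]

/-- Proposition 1 of the paper: half-quadratic (convex-conjugate) representation
of the Gaussian kernel κ_σ(x) = exp(−x²/(2σ²)) as a supremum over p ∈ [−1, 0),
attained at p = −κ_σ(x). -/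
theorem gaussian_kernel_half_quadratic (σ : ℝ) (hσ : 0 < σ) :
    ∃ ψ : ℝ → ℝ,
      ConvexOn ℝ (Set.Ico (-1 : ℝ) 0) ψ ∧
      Set.MapsTo ψ (Set.Ico (-1 : ℝ) 0) (Set.Ico (-1 : ℝ) 0) ∧
      ∀ x : ℝ,
        IsLUB ((fun p => p / (2 * σ ^ 2) * x ^ 2 - ψ p) '' Set.Ico (-1 : ℝ) 0)
          (Real.exp (-x ^ 2 / (2 * σ ^ 2))) ∧
        (-Real.exp (-x ^ 2 / (2 * σ ^ 2))) / (2 * σ ^ 2) * x ^ 2 -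
            ψ (-Real.exp (-x ^ 2 / (2 * σ ^ 2))) =
          Real.exp (-x ^ 2 / (2 * σ ^ 2)) := by
  refine ⟨fun p => p + (-p) * Real.log (-p), ?_, ?_, ?_⟩
  · -- convexity
    have h1 : ConvexOn ℝ (Set.Ico (-1:ℝ) 0) (fun p : ℝ => p) :=
      (convexOn_id (convex_Ico _ _))
    have h2 := (psi_convex_aux.subset (fun p (hp : p ∈ Set.Ico (-1:ℝ) 0) => le_of_lt hp.2) (convex_Ico _ _))
    exact h1.add h2
  · -- maps to
    intro p hp
    obtain ⟨hp1, hp2⟩ := hp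
    have hq : 0 < -p := by linarith
    have hq1 : -p ≤ 1 := by linarith
    simp only []
    constructor
    · -- -1 ≤ ψ p : q log q ≥ q - 1 with q = -p
      have h := Real.log_le_sub_one_of_pos (show (0:ℝ) < 1 / (-p) by positivity)
      rw [Real.log_div one_ne_zero (ne_of_gt hq), Real.log_one] at h
      have := mul_le_mul_of_nonneg_left h hq.le
      have hd : (-p) * (1 / (-p)) = 1 := by rw [mul_one_div, div_self (ne_of_gt hq)]
      nlinarith
    · have hlog : Real.log (-p) ≤ 0 := Real.log_nonpos hq.le hq1
      nlinarith
  · intro x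
    set t : ℝ := x ^ 2 / (2 * σ ^ 2) with ht
    have hσ2 : (0:ℝ) < 2 * σ ^ 2 := by positivity
    have htnn : 0 ≤ t := by positivity
    have hneg : -x ^ 2 / (2 * σ ^ 2) = -t := by rw [ht]; ring
    set E : ℝ := Real.exp (-t) with hE
    have hEpos : 0 < E := Real.exp_pos _
    have hE1 : E ≤ 1 := Real.exp_le_one_iff.mpr (by linarith)
    have hlogE : Real.log E = -t := Real.log_exp _
    -- the value at p = -E
    have hval : (-E) / (2 * σ ^ 2) * x ^ 2 - ((-E) + (-(-E)) * Real.log (-(-E))) = E := by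
      have h1 : (-E) / (2 * σ ^ 2) * x ^ 2 = -E * t := by rw [ht]; ring
      rw [h1]
      simp only [neg_neg, hlogE]
      ring
    have hmem : -E ∈ Set.Ico (-1:ℝ) 0 := ⟨by linarith, by linarith⟩
    have hub : ∀ y ∈ (fun p => p / (2 * σ ^ 2) * x ^ 2 -
        (p + (-p) * Real.log (-p))) '' Set.Ico (-1:ℝ) 0, y ≤ E := by
      rintro y ⟨p, ⟨hp1, hp2⟩, rfl⟩
      simp only []
      have hq : 0 < -p := by linarith
      have key := key_ineq t hq
      have h1 : p / (2 * σ ^ 2) * x ^ 2 = p * t := by rw [ht]; ring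
      rw [h1]
      calc p * t - (p + (-p) * Real.log (-p))
          = (-p) * (-t - Real.log (-p)) + (-p) := by ring
        _ ≤ Real.exp (-t) := key
        _ = E := rfl
    constructor
    · rw [hneg]
      constructor
      · exact hub
      · intro b hb
        have : (-E) / (2 * σ ^ 2) * x ^ 2 -
            ((-E) + (-(-E)) * Real.log (-(-E))) ≤ b := hb ⟨-E, hmem, rfl⟩
        rwa [hval] at this
    · rw [hneg]
      exact hval
end

section
/- Let σ > 0 and define θ : (0, 1/(2σ²)] → ℝ by θ(w) = 1 − 2σ²·w + 2σ²·w·log(2σ²·w). Then for every x ∈ ℝ and every w ∈ (0, 1/(2σ²)], one has w·x² + θ(w) ≥ 1 − exp(−x²/(2σ²)), with equality if and only if w = exp(−x²/(2σ²))/(2σ²). Consequently, 1 − exp(−x²/(2σ²)) = inf_{0 < w ≤ 1/(2σ²)} ( w·x² + θ(w) ). -/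
open Real Set

lemma welsch_key (a u : ℝ) (hu : 0 < u) :
    0 ≤ u * (a + Real.log u - 1) + Real.exp (-a) ∧
    (u * (a + Real.log u - 1) + Real.exp (-a) = 0 ↔ u = Real.exp (-a)) := by
  set t := -a - Real.log u with ht
  have hexp : Real.exp t = Real.exp (-a) / u := by
    rw [ht, Real.exp_sub, Real.exp_log hu]
  have h1 : t + 1 ≤ Real.exp t := Real.add_one_le_exp t
  have h2 : u * (t + 1) ≤ Real.exp (-a) := by
    calc u * (t + 1) ≤ u * Real.exp t := by nlinarith
    _ = Real.exp (-a) := by rw [hexp]; field_simp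
  constructor
  · nlinarith [Real.log_le_sub_one_of_pos hu]
  constructor
  · intro h
    by_contra hne
    have htne : t ≠ 0 := by
      intro h0
      apply hne
      have : Real.log u = -a := by simp [ht] at h0; linarith
      rw [← this, Real.exp_log hu]
    have h1' : t + 1 < Real.exp t := Real.add_one_lt_exp htne
    have h2' : u * (t + 1) < Real.exp (-a) := by
      calc u * (t + 1) < u * Real.exp t := by nlinarith
      _ = Real.exp (-a) := by rw [hexp]; field_simp
    nlinarith
  · intro h
    subst h
    rw [Real.log_exp]
    ring

/-- Explicit half-quadratic infimum representation of the Welsch loss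
1 − exp(−x²/(2σ²)) = inf_{0 < w ≤ 1/(2σ²)} (w x² + θ(w)) with
θ(w) = 1 − 2σ²w + 2σ²w·log(2σ²w), the infimum being attained exactly at
w = exp(−x²/(2σ²))/(2σ²). -/
theorem welsch_half_quadratic_inf (σ : ℝ) (hσ : 0 < σ) :
    let θ : ℝ → ℝ := fun w => 1 - 2 * σ ^ 2 * w + 2 * σ ^ 2 * w * Real.log (2 * σ ^ 2 * w)
    ∀ x : ℝ,
      (∀ w ∈ Set.Ioc (0 : ℝ) (1 / (2 * σ ^ 2)),
        1 - Real.exp (-x ^ 2 / (2 * σ ^ 2)) ≤ w * x ^ 2 + θ w ∧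
        (w * x ^ 2 + θ w = 1 - Real.exp (-x ^ 2 / (2 * σ ^ 2)) ↔
          w = Real.exp (-x ^ 2 / (2 * σ ^ 2)) / (2 * σ ^ 2))) ∧
      IsGLB ((fun w => w * x ^ 2 + θ w) '' Set.Ioc (0 : ℝ) (1 / (2 * σ ^ 2)))
        (1 - Real.exp (-x ^ 2 / (2 * σ ^ 2))) := by
  intro θ x
  have hs : (0 : ℝ) < 2 * σ ^ 2 := by positivity
  set s : ℝ := 2 * σ ^ 2 with hsdef
  set a : ℝ := x ^ 2 / s with hadef
  have hax : -x ^ 2 / s = -a := by rw [hadef]; ring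
  have ha0 : 0 ≤ a := by positivity
  have hE1 : Real.exp (-a) ≤ 1 := Real.exp_le_one_iff.mpr (by linarith)
  have main : ∀ w ∈ Set.Ioc (0 : ℝ) (1 / s),
      1 - Real.exp (-x ^ 2 / s) ≤ w * x ^ 2 + θ w ∧
      (w * x ^ 2 + θ w = 1 - Real.exp (-x ^ 2 / s) ↔
        w = Real.exp (-x ^ 2 / s) / s) := by
    intro w hw
    obtain ⟨hw0, hw1⟩ := hw
    have hu : 0 < s * w := by positivity
    obtain ⟨hkey, hkeyiff⟩ := welsch_key a (s * w) hu
    have hwa : w * x ^ 2 = (s * w) * a := by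
      rw [hadef]; field_simp
    have hF : w * x ^ 2 + θ w =
        ((s * w) * (a + Real.log (s * w) - 1) + Real.exp (-a)) + (1 - Real.exp (-a)) := by
      simp only [θ, hwa, hsdef]
      ring
    rw [hax, hF]
    constructor
    · linarith
    · constructor
      · intro h
        have h0 : (s * w) * (a + Real.log (s * w) - 1) + Real.exp (-a) = 0 := by linarith
        have := hkeyiff.mp h0
        field_simp at this ⊢
        linarith [this]
      · intro h
        have : s * w = Real.exp (-a) := by
          rw [h]; field_simp
        rw [hkeyiff.mpr this]
        ring
  refine ⟨main, ?_⟩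
  have hwstar : Real.exp (-x ^ 2 / s) / s ∈ Set.Ioc (0 : ℝ) (1 / s) := by
    constructor
    · positivity
    · rw [div_le_div_iff₀ hs hs, hax]
      nlinarith
  have hmem : (1 - Real.exp (-x ^ 2 / s)) ∈
      (fun w => w * x ^ 2 + θ w) '' Set.Ioc (0 : ℝ) (1 / s) := by
    refine ⟨Real.exp (-x ^ 2 / s) / s, hwstar, ?_⟩
    exact ((main _ hwstar).2).mpr rfl
  constructor
  · rintro y ⟨w, hw, rfl⟩
    exact (main w hw).1
  · intro b hb
    exact hb hmem
end

section
/- Let σ > 0 and define ψ : [−1, 0) → ℝ by ψ(p) = p − p·log(−p). Then for every x ∈ ℝ and every p ∈ [−1, 0), one has (p/(2σ²))·x² − ψ(p) ≤ exp(−x²/(2σ²)), with equality if and only if p = −exp(−x²/(2σ²)). -/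
open Real Set

/-- Explicit version of Proposition 1: with ψ(p) = p − p·log(−p), for every
p ∈ [−1, 0) one has (p/(2σ²))x² − ψ(p) ≤ exp(−x²/(2σ²)), with equality iff
p = −exp(−x²/(2σ²)). -/
theorem gaussian_kernel_half_quadratic_explicit (σ : ℝ) (hσ : 0 < σ) :
    let ψ : ℝ → ℝ := fun p => p - p * Real.log (-p)
    ∀ x : ℝ, ∀ p ∈ Set.Ico (-1 : ℝ) 0,
      p / (2 * σ ^ 2) * x ^ 2 - ψ p ≤ Real.exp (-x ^ 2 / (2 * σ ^ 2)) ∧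
      (p / (2 * σ ^ 2) * x ^ 2 - ψ p = Real.exp (-x ^ 2 / (2 * σ ^ 2)) ↔
        p = -Real.exp (-x ^ 2 / (2 * σ ^ 2))) := by
  intro ψ x p hp
  obtain ⟨hp1, hp0⟩ := hp
  have hq : (0:ℝ) < -p := by linarith
  have hσ2 : (0:ℝ) < 2 * σ ^ 2 := by positivity
  set t : ℝ := x ^ 2 / (2 * σ ^ 2) with ht
  set y : ℝ := -t - Real.log (-p) with hy
  have harg : -x ^ 2 / (2 * σ ^ 2) = -t := by rw [ht]; ring
  have hlhs : p / (2 * σ ^ 2) * x ^ 2 - ψ p = (-p) * (y + 1) := by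
    simp only [ψ, hy, ht]
    field_simp
    ring
  have hexp : Real.exp (-t) = (-p) * Real.exp y := by
    rw [hy, Real.exp_sub, Real.exp_log hq]
    field_simp
    rw [div_self (ne_of_lt hp0)]
  have hle : y + 1 ≤ Real.exp y := Real.add_one_le_exp y
  constructor
  · rw [hlhs, harg, hexp]
    exact mul_le_mul_of_nonneg_left hle (le_of_lt hq)
  · rw [hlhs, harg, hexp]
    constructor
    · intro h
      have hy0 : y = 0 := by
        by_contra hne
        have := Real.add_one_lt_exp hne
        nlinarith
      have : Real.log (-p) = -t := by rw [hy] at hy0; linarith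
      have := congrArg Real.exp this
      rw [Real.exp_log hq] at this
      linarith
    · intro h
      have hnp : -p = Real.exp (-t) := by linarith
      have hy0 : y = 0 := by
        rw [hy, hnp, Real.log_exp]; ring
      rw [hy0]
      simp
end
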